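/- Define r₃ : ℂ × ℂ² → ℝ by r₃(w,z₁,z₂) := Im(w) − z₁·conj(z₂) − z₂·conj(z₁) − |z₁|⁴, and for β ∈ ℝ define the linear map Λ_β : ℂ³ → ℂ³ by Λ_β(w,z₁,z₂) := (e^{4β}w, e^{β}z₁, e^{3β}z₂). Then for all β ∈ ℝ and all (w,z₁,z₂) ∈ ℂ³, r₃(Λ_β(w,z₁,z₂)) = e^{4β}·r₃(w,z₁,z₂); in particular each Λ_β fixes the origin and maps the hypersurface M₃ := r₃⁻¹(0) onto itself, and for β ≠ 0 it is a non-isometric homothety of the contact form (scaling it by e^{4β} ≠ 1). -/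

import Mathlib

open ComplexConjugate

/-- `r₃(w,z₁,z₂) = Im w − z₁ conj z₂ − z₂ conj z₁ − |z₁|⁴` on `ℂ³`. -/
noncomputable def r3 : ℂ × ℂ × ℂ → ℝ := fun p =>
  p.1.im - (p.2.1 * conj p.2.2 + p.2.2 * conj p.2.1).re - ‖p.2.1‖ ^ 4

/-- `M₃ = r₃⁻¹(0)`. -/
noncomputable def M3 : Set (ℂ × ℂ × ℂ) := r3 ⁻¹' {0}

/-- `Λ_β(w,z₁,z₂) = (e^{4β}w, e^{β}z₁, e^{3β}z₂)`. -/
noncomputable def Λdef (β : ℝ) : ℂ × ℂ × ℂ → ℂ × ℂ × ℂ := fun p =>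
  ((Real.exp (4 * β) : ℂ) * p.1, (Real.exp β : ℂ) * p.2.1, (Real.exp (3 * β) : ℂ) * p.2.2)

/-! The map `Λ_β` rescales `(w, z₁, z₂)` with weights `(4, 1, 3)` by the factor `e^β`, and `r₃` is
weighted homogeneous of degree `4` for these weights. The maps `Λ_β` form a one-parameter group,
so each is bijective, and a bijection that multiplies `r₃` by a nonzero constant preserves
its zero set `M₃`. -/

theorem Set.image_preimage_zero_of_comp_eq_mul {X R : Type*} [MulZeroClass R] [NoZeroDivisors R]
    {f : X → R} {g : X → X} {c : R} (hc : c ≠ 0) (hg : Function.Surjective g)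
    (hfg : ∀ x, f (g x) = c * f x) : g '' (f ⁻¹' {0}) = f ⁻¹' {0} := by
  have hpre : g ⁻¹' (f ⁻¹' {0}) = f ⁻¹' {0} := by
    ext x
    simp [hfg, hc]
  calc g '' (f ⁻¹' {0}) = g '' (g ⁻¹' (f ⁻¹' {0})) := by rw [hpre]
    _ = f ⁻¹' {0} := Set.image_preimage_eq _ hg

theorem r3_weighted_homogeneous (a : ℝ) (w z₁ z₂ : ℂ) :
    r3 ((a : ℂ) ^ 4 * w, a * z₁, (a : ℂ) ^ 3 * z₂) = a ^ 4 * r3 (w, z₁, z₂) := by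
  have hcross : (a : ℂ) * z₁ * conj ((a : ℂ) ^ 3 * z₂) + (a : ℂ) ^ 3 * z₂ * conj ((a : ℂ) * z₁)
      = ((a ^ 4 : ℝ) : ℂ) * (z₁ * conj z₂ + z₂ * conj z₁) := by
    simp only [map_mul, map_pow, Complex.conj_ofReal]
    push_cast
    ring
  have hnorm : ‖(a : ℂ) * z₁‖ ^ 4 = a ^ 4 * ‖z₁‖ ^ 4 := by
    rw [norm_mul, Complex.norm_real, Real.norm_eq_abs, mul_pow, (by decide : Even 4).pow_abs]
  simp only [r3]
  rw [hcross, hnorm, Complex.re_ofReal_mul, ← Complex.ofReal_pow, Complex.im_ofReal_mul]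
  ring

theorem Λdef_eq (β : ℝ) (p : ℂ × ℂ × ℂ) :
    Λdef β p = ((Real.exp β : ℂ) ^ 4 * p.1, Real.exp β * p.2.1, (Real.exp β : ℂ) ^ 3 * p.2.2) := by
  simp only [Λdef, ← Complex.ofReal_pow, ← Real.exp_nat_mul]
  norm_num

theorem Λdef_Λdef (β γ : ℝ) (p : ℂ × ℂ × ℂ) : Λdef β (Λdef γ p) = Λdef (β + γ) p := by
  simp only [Λdef, ← mul_assoc, ← Complex.ofReal_mul, ← Real.exp_add, mul_add]

theorem Λdef_zero : Λdef 0 = id := by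
  ext p <;> simp [Λdef]

theorem Λdef_surjective (β : ℝ) : Function.Surjective (Λdef β) :=
  fun p => ⟨Λdef (-β) p, by rw [Λdef_Λdef, add_neg_cancel, Λdef_zero, id]⟩

theorem r3_Λdef (β : ℝ) (p : ℂ × ℂ × ℂ) : r3 (Λdef β p) = Real.exp (4 * β) * r3 p := by
  rw [Λdef_eq, r3_weighted_homogeneous, ← Real.exp_nat_mul]
  norm_num

/-- `r₃ ∘ Λ_β = e^{4β} r₃`; in particular `Λ_β` fixes the origin and maps
`M₃ = r₃⁻¹(0)` onto itself, and for `β ≠ 0` it is a non-isometric homothety,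
scaling the contact form by `e^{4β} ≠ 1`. -/
theorem stmt_16 (β : ℝ) :
    (∀ p : ℂ × ℂ × ℂ, r3 (Λdef β p) = Real.exp (4 * β) * r3 p) ∧
    Λdef β 0 = 0 ∧
    Λdef β '' M3 = M3 ∧
    (β ≠ 0 → Real.exp (4 * β) ≠ 1) := by
  refine ⟨r3_Λdef β, by simp [Λdef], ?_, fun hβ => ?_⟩
  · exact Set.image_preimage_zero_of_comp_eq_mul (Real.exp_pos _).ne' (Λdef_surjective β)
      (r3_Λdef β)
  · simpa [Real.exp_eq_one_iff] using hβ
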